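/- arXiv:1310.4764 — 2 statements merged into one kernel-verified Lean document; each statement's English description precedes it below -/
import Mathlib

section
/- Dimension-reduction step: Let d ≥ 2, 3 ≤ j ≤ d, ε ∈ (0, 4/15), let L_0 divide L_s, G_0 = L_0·Z^d, fix x ∈ L_s·Z^d, y ∈ G_0 ∩ (x+[−L_s,2L_s)^d), pairwise orthogonal e_1,…,e_j ∈ Z^d with |e_i|₁ = 1, and a set G ⊆ G_0 ∩ (x+[−L_s,2L_s)^d). Write g' = G ∩ (y + Σ_{i=1}^j Z·e_i). Assume: (i) every (j−1)-dimensional slice M_k = (k·L_0·e_1 + (y + Σ_{i=2}^j Z·e_i)) ∩ (x+[−L_s,2L_s)^d) ∩ G_0 which is non-empty contains at least (1 − ε/2)·(3L_s/L_0)^{j−1} points of G; (ii) there is γ_{j−1} > 0 such that for every such slice M_k, every subset a of G ∩ M_k with |a| ∈ [ (ε/8)(3L_s/L_0)^{j−1} , (1 − ε/8)(3L_s/L_0)^{j−1} ] has boundary within G ∩ M_k of size at least γ_{j−1}·(3L_s/L_0)^{j−2}; (iii) there is γ_2 > 0 such that for every 2-dimensional slice N_t = (Σ_{i=3}^j t_i·L_0·e_i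 + (y + Z·e_1 + Z·e_2)) ∩ (x+[−L_s,2L_s)^d) ∩ G_0 (t ∈ Z^{j−2}), every subset a of G ∩ N_t with |a| ∈ [ (ε/16)(3L_s/L_0)^2 , (1 − ε/16)(3L_s/L_0)^2 ] has boundary within G ∩ N_t of size at least γ_2·(3L_s/L_0). Then for every a' ⊆ g' with |a'| ∈ [ ε(3L_s/L_0)^j , (1−ε)(3L_s/L_0)^j ], the boundary of a' within g' has at least min( (ε/8)·γ_{j−1} , (1/3)·γ_2 )·(3L_s/L_0)^{j−1} elements. -/
open MeasureTheory Filter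
open scoped ENNReal

namespace Perco

/-- A point of the lattice `ℤ^d`. -/
abbrev Pt (d : ℕ) := Fin d → ℤ

/-- A percolation configuration on `ℤ^d`. -/
abbrev Config (d : ℕ) := Pt d → Bool

variable {d : ℕ}

/-- The `ℓ¹`-distance on `ℤ^d`. -/
def dist1 (x y : Pt d) : ℕ := ∑ i, (x i - y i).natAbs

/-- The `ℓ^∞`-distance on `ℤ^d`. -/
def distInf (x y : Pt d) : ℕ := Finset.univ.sup fun i => (x i - y i).natAbs

/-- The closed `ℓ^∞`-ball of radius `R` around `x`. -/
def ballZ (x : Pt d) (R : ℕ) : Set (Pt d) := {y | distInf x y ≤ R}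

/-- Nearest-neighbour adjacency in `ℤ^d`. -/
def adj (x y : Pt d) : Prop := dist1 x y = 1

/-- The occupied set of a configuration. -/
def SS (ω : Config d) : Set (Pt d) := {x | ω x = true}

/-- One step of a nearest-neighbour path staying inside `T`. -/
def stepRel (T : Set (Pt d)) (x y : Pt d) : Prop := adj x y ∧ x ∈ T ∧ y ∈ T

/-- `x` and `y` are connected by a nearest-neighbour path inside `T`. -/
def connIn (T : Set (Pt d)) (x y : Pt d) : Prop :=
  x ∈ T ∧ y ∈ T ∧ Relation.ReflTransGen (stepRel T) x y

/-- The connected component (cluster) of `x` in `T`. -/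
def cluster (T : Set (Pt d)) (x : Pt d) : Set (Pt d) := {y | connIn T x y}

/-- `S_r`: vertices of `S(ω)` in connected components of `ℓ¹`-diameter at least `r`. -/
def Sr (ω : Config d) (r : ℝ) : Set (Pt d) :=
  {x | x ∈ SS ω ∧ ∃ y ∈ cluster (SS ω) x, ∃ z ∈ cluster (SS ω) x, r ≤ (dist1 y z : ℝ)}

/-- `S_∞`: vertices of `S(ω)` in infinite connected components. -/
def Sinf (ω : Config d) : Set (Pt d) := {x | x ∈ SS ω ∧ (cluster (SS ω) x).Infinite}

/-- The shift of a configuration by `x`. -/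
def shift (x : Pt d) (ω : Config d) : Config d := fun y => ω (x + y)

/-- An increasing event. -/
def IncreasingEvent (G : Set (Config d)) : Prop :=
  ∀ ω ω' : Config d, (∀ x, ω x = true → ω' x = true) → ω ∈ G → ω' ∈ G

/-- A decreasing event. -/
def DecreasingEvent (G : Set (Config d)) : Prop :=
  ∀ ω ω' : Config d, (∀ x, ω' x = true → ω x = true) → ω ∈ G → ω' ∈ G

/-- The event `G` depends only on the coordinates in `B`. -/
def DependsOn (G : Set (Config d)) (B : Set (Pt d)) : Prop :=
  ∀ ω ω' : Config d, (∀ x ∈ B, ω x = ω' x) → (ω ∈ G ↔ ω' ∈ G)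

/-- The edge boundary of `A` in `Sset`: (directed representatives of) edges of `ℤ^d`
with one endpoint in `A` and the other in `Sset \ A`. -/
def edgeBd (Sset A : Set (Pt d)) : Set (Pt d × Pt d) :=
  {p | adj p.1 p.2 ∧ p.1 ∈ A ∧ p.2 ∈ Sset \ A}

/-- The density `η(u) = P[0 ∈ S_∞]` of the infinite cluster. -/
noncomputable def eta (d : ℕ) (P : Measure (Config d)) : ℝ :=
  (P {ω | (0 : Pt d) ∈ Sinf ω}).toReal

/-- The first local-uniqueness event of axiom S1. -/
def locUniq1 (d : ℕ) (R : ℕ) : Set (Config d) :=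
  {ω | (Sr ω R ∩ ballZ (0 : Pt d) R).Nonempty}

/-- The second local-uniqueness event of axiom S1. -/
def locUniq2 (d : ℕ) (R : ℕ) : Set (Config d) :=
  {ω | ∀ x ∈ Sr ω ((R : ℝ)/10) ∩ ballZ (0 : Pt d) R,
       ∀ y ∈ Sr ω ((R : ℝ)/10) ∩ ballZ (0 : Pt d) R,
       connIn (SS ω ∩ ballZ (0 : Pt d) (2*R)) x y}


/-! ### Renormalization scales and good/bad boxes -/

/-- The scales `l_k = l_0·4^{k^{θ_sc}}`. -/
def lSc (l0 θsc k : ℕ) : ℕ := l0 * 4 ^ (k ^ θsc)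

/-- The scales `r_k = r_0·2^{k^{θ_sc}}`. -/
def rSc (r0 θsc k : ℕ) : ℕ := r0 * 2 ^ (k ^ θsc)

/-- The scales `L_0 = L_0`, `L_{k+1} = l_k·L_k`. -/
def LSc (l0 L0 θsc : ℕ) : ℕ → ℕ
  | 0 => L0
  | k+1 => lSc l0 θsc k * LSc l0 L0 θsc k

/-- The renormalized lattice `G = L·ℤ^d`. -/
def lattice (d L : ℕ) : Set (Pt d) := {x | ∀ i, (L : ℤ) ∣ x i}

/-- The box `x + [0,n)^d`. -/
def box (x : Pt d) (n : ℕ) : Set (Pt d) := {y | ∀ i, x i ≤ y i ∧ y i < x i + n}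

/-- The box `x + [lo,hi)^d`. -/
def boxI (x : Pt d) (lo hi : ℤ) : Set (Pt d) := {y | ∀ i, x i + lo ≤ y i ∧ y i < x i + hi}

/-- The corner `x + e·L_0` of the sub-box indexed by `e ∈ {0,1}^d`. -/
def subCorner (x : Pt d) (L0 : ℕ) (e : Fin d → Bool) : Pt d :=
  fun i => x i + (if e i then (L0 : ℤ) else 0)

/-- `C` is a connected component of `S_{L0} ∩ B` of cardinality at least `(3/4)·η·L_0^d`. -/
def bigCompIn (ω : Config d) (η : ℝ) (L0 : ℕ) (B : Set (Pt d)) (C : Set (Pt d)) : Prop :=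
  (∃ w ∈ Sr ω (L0 : ℝ) ∩ B, C = cluster (Sr ω (L0 : ℝ) ∩ B) w) ∧
  (3/4 : ℝ) * η * (L0 : ℝ) ^ d ≤ C.ncard

/-- The event `A^u_x`: each of the `2^d` sub-boxes of side `L_0` of `x + [0,2L_0)^d` contains a
connected component of `S_{L_0}` with at least `(3/4)·η·L_0^d` vertices, and all these components
are connected in `S ∩ (x+[0,2L_0)^d)`. -/
def eventA (d : ℕ) (η : ℝ) (L0 : ℕ) (x : Pt d) : Set (Config d) :=
  {ω | (∀ e : Fin d → Bool, ∃ C, bigCompIn ω η L0 (box (subCorner x L0 e) L0) C) ∧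
       (∀ e e' : Fin d → Bool, ∀ C C' : Set (Pt d), ∀ y z : Pt d,
          bigCompIn ω η L0 (box (subCorner x L0 e) L0) C →
          bigCompIn ω η L0 (box (subCorner x L0 e') L0) C' →
          y ∈ C → z ∈ C' → connIn (SS ω ∩ box x (2*L0)) y z)}

/-- The event `B^u_x`: each of the `2^d` sub-boxes of side `L_0` of `x + [0,2L_0)^d` contains at
most `(5/4)·η·L_0^d` vertices of `S_{L_0}`. -/
def eventB (d : ℕ) (η : ℝ) (L0 : ℕ) (x : Pt d) : Set (Config d) :=
  {ω | ∀ e : Fin d → Bool,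
    ((Sr ω (L0 : ℝ) ∩ box (subCorner x L0 e) L0).ncard : ℝ) ≤ (5/4 : ℝ) * η * (L0 : ℝ) ^ d}

/-- The recursive cascading of a family of "bad" seed events along the renormalization scheme. -/
def cascade (d : ℕ) (r0 l0 L0 θsc : ℕ) (seed : Pt d → Set (Config d)) :
    ℕ → Pt d → Set (Config d)
  | 0, x => seed x
  | k+1, x => {ω | ∃ x₁ x₂ : Pt d,
      x₁ ∈ lattice d (LSc l0 L0 θsc k) ∩ box x (LSc l0 L0 θsc (k+1)) ∧
      x₂ ∈ lattice d (LSc l0 L0 θsc k) ∩ box x (LSc l0 L0 θsc (k+1)) ∧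
      rSc r0 θsc k * LSc l0 L0 θsc k ≤ distInf x₁ x₂ ∧
      ω ∈ cascade d r0 l0 L0 θsc seed k x₁ ∧ ω ∈ cascade d r0 l0 L0 θsc seed k x₂}

/-- The event `Ā^u_{x,k}`. -/
def Abar (d : ℕ) (η : ℝ) (r0 l0 L0 θsc : ℕ) : ℕ → Pt d → Set (Config d) :=
  cascade d r0 l0 L0 θsc (fun x => (eventA d η L0 x)ᶜ)

/-- The event `B̄^u_{x,k}`. -/
def Bbar (d : ℕ) (η : ℝ) (r0 l0 L0 θsc : ℕ) : ℕ → Pt d → Set (Config d) :=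
  cascade d r0 l0 L0 θsc (fun x => (eventB d η L0 x)ᶜ)

/-- The event that `x ∈ G_k` is `k`-bad. -/
def kBad (d : ℕ) (η : ℝ) (r0 l0 L0 θsc k : ℕ) (x : Pt d) : Set (Config d) :=
  Abar d η r0 l0 L0 θsc k x ∪ Bbar d η r0 l0 L0 θsc k x

/-- The event `H`: (a) every vertex of `G_r ∩ B(0,3R)` is `r`-good, and (b) any two points of
`S_{L_s}` lying in a common box `z+[−2L_s,2L_s)^d`, `z ∈ B(0,2R)`, are connected inside
`S ∩ (z+[−4L_s,4L_s)^d)`. -/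
def eventH (d : ℕ) (η : ℝ) (r0 l0 L0 θsc s r R : ℕ) : Set (Config d) :=
  {ω | (∀ z ∈ lattice d (LSc l0 L0 θsc r) ∩ ballZ (0 : Pt d) (3*R),
          ω ∉ kBad d η r0 l0 L0 θsc r z) ∧
       (∀ z ∈ ballZ (0 : Pt d) (2*R),
          ∀ x ∈ Sr ω ((LSc l0 L0 θsc s : ℕ) : ℝ) ∩
                boxI z (-(2*(LSc l0 L0 θsc s) : ℤ)) (2*(LSc l0 L0 θsc s)),
          ∀ y ∈ Sr ω ((LSc l0 L0 θsc s : ℕ) : ℝ) ∩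
                boxI z (-(2*(LSc l0 L0 θsc s) : ℤ)) (2*(LSc l0 L0 θsc s)),
          connIn (SS ω ∩ boxI z (-(4*(LSc l0 L0 θsc s) : ℤ)) (4*(LSc l0 L0 θsc s))) x y)}

/-- The boundary of `A` within `g`, in the `L`-renormalized lattice: pairs of vertices of `g` at
`ℓ¹`-distance `L` with one vertex in `A` and the other in `g ∖ A`. -/
def bdWithin (L : ℕ) (g A : Set (Pt d)) : Set (Pt d × Pt d) :=
  {p | dist1 p.1 p.2 = L ∧ p.1 ∈ A ∧ p.2 ∈ g \ A}

/-- One step of an `L`-renormalized nearest-neighbour path inside `T`. -/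
def stepRelL (L : ℕ) (T : Set (Pt d)) (x y : Pt d) : Prop :=
  dist1 x y = L ∧ x ∈ T ∧ y ∈ T

/-- `x` and `y` are connected by an `L`-renormalized nearest-neighbour path inside `T`. -/
def connInL (L : ℕ) (T : Set (Pt d)) (x y : Pt d) : Prop :=
  x ∈ T ∧ y ∈ T ∧ Relation.ReflTransGen (stepRelL L T) x y

/-- The set `T` is connected as a subgraph of the `L`-renormalized lattice. -/
def IsConnL (L : ℕ) (T : Set (Pt d)) : Prop := ∀ x ∈ T, ∀ y ∈ T, connInL L T x y

/-- The infinite product `f_j(r_0/l_0) = ∏_{i=0}^∞ (1 − 3(r_i/l_i)^j)`. -/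
noncomputable def fjProd (r0 l0 θsc j : ℕ) : ℝ :=
  ∏' i : ℕ, (1 - 3 * ((rSc r0 θsc i : ℝ) / (lSc l0 θsc i)) ^ j)

/-- The affine sublattice `x₀ + ∑_{i=1}^j ℤ·e_i`. -/
def sliceSpan {j : ℕ} (x0 : Pt d) (e : Fin j → Pt d) : Set (Pt d) :=
  {y | ∃ c : Fin j → ℤ, y = x0 + ∑ i, c i • e i}

/-- The vectors `e_1,…,e_j` are pairwise orthogonal with `|e_i|₁ = 1`. -/
def orthoUnit {j : ℕ} (e : Fin j → Pt d) : Prop :=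
  (∀ i, dist1 (0 : Pt d) (e i) = 1) ∧
  Pairwise fun i i' => (∑ t, (e i t) * (e i' t)) = 0

/-!
Write `X = 3L_s/L_0`. In lattice coordinates along `e_1, …, e_j`, the set `g'` sits in a discrete
cube of side `X`. If at least `εX/8` of the slices `M_k` meet `a'` in a proportion within
`[ε/8, 1 - ε/8]`, their pairwise disjoint boundaries already give `(ε/8)γ_{j-1}X^{j-1}` edges; if
at least `X^{j-2}/3` of the planes `N_t` meet `a'` in a proportion within `[ε/16, 1 - ε/16]`,
they give `(γ_2/3)X^{j-1}` edges. Otherwise count the lines parallel to `e_2` that are at least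
half full: at least `3εX/4` slices are sparse and at least `3εX/4` are dense, sparse slices
contain few half-full lines and dense slices many, and double counting over the planes then
bounds the proportion of nearly full planes both by `3ε/10` from above and by `1/2 - ε/4` from
below, which is impossible for `ε < 4/15`.
-/

open Finset

section Counting

variable {ι : Type*} {s : Finset ι} {f : ι → ℝ} {M N δ : ℝ}

lemma card_filter_half_le_lt_of_sum_lt (hf : ∀ i ∈ s, 0 ≤ f i) (hM : 0 < M)
    (h : ∑ i ∈ s, f i < δ * (M * N)) : (#{i ∈ s | M / 2 ≤ f i} : ℝ) < 2 * δ * N := by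
  have hmarkov : #{i ∈ s | M / 2 ≤ f i} • (M / 2) ≤ ∑ i ∈ s, f i :=
    (card_nsmul_le_sum _ f _ fun i hi => (mem_filter.1 hi).2).trans
      (sum_le_sum_of_subset_of_nonneg (filter_subset _ s) fun i hi _ => hf i hi)
  rw [nsmul_eq_mul] at hmarkov
  nlinarith

lemma lt_card_filter_half_le_of_lt_sum (hf : ∀ i ∈ s, f i ≤ M) (hM : 0 < M)
    (hs : (#s : ℝ) ≤ N) (h : (1 - δ) * (M * N) < ∑ i ∈ s, f i) :
    (1 - 2 * δ) * N < #{i ∈ s | M / 2 ≤ f i} := by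
  have hfull : ∑ i ∈ s with M / 2 ≤ f i, f i ≤ #{i ∈ s | M / 2 ≤ f i} * M := by
    simpa using sum_le_card_nsmul _ f M fun i hi => hf i (mem_filter.1 hi).1
  have hrest : ∑ i ∈ s with ¬M / 2 ≤ f i, f i ≤ #{i ∈ s | ¬M / 2 ≤ f i} * (M / 2) := by
    simpa using sum_le_card_nsmul _ f (M / 2) fun i hi => (not_le.1 (mem_filter.1 hi).2).le
  have hsplit := sum_filter_add_sum_filter_not s (fun i => M / 2 ≤ f i) f
  have hcard : (#{i ∈ s | M / 2 ≤ f i} : ℝ) + #{i ∈ s | ¬M / 2 ≤ f i} = #s := by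
    exact_mod_cast card_filter_add_card_filter_not _
  nlinarith

lemma card_filter_add_card_le [DecidableEq ι] {s t : Finset ι} (hst : s ⊆ t)
    (P : ι → Prop) [DecidablePred P] : #{i ∈ t | P i} + #s ≤ #{i ∈ s | P i} + #t := by
  have hsub : {i ∈ t | P i} ⊆ {i ∈ s | P i} ∪ (t \ s) := by
    intro i hi
    rw [mem_filter] at hi
    by_cases his : i ∈ s
    · exact mem_union_left _ (mem_filter.2 ⟨his, hi.2⟩)
    · exact mem_union_right _ (mem_sdiff.2 ⟨hi.1, his⟩)
  have := (card_le_card hsub).trans (card_union_le _ _)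
  have := card_sdiff_add_card_eq_card hst
  omega

lemma card_piFinset_ite_val_lt {j k N : ℕ} {α : Type*} (a : α) (W : Fin j → Finset α)
    (hW : ∀ i, #(W i) = N) :
    #(Fintype.piFinset fun i : Fin j => if (i : ℕ) < k then {a} else W i) = N ^ (j - k) := by
  have hcard : ∀ i : Fin j, #(if (i : ℕ) < k then {a} else W i) = if (i : ℕ) < k then 1 else N :=
    fun i => by split_ifs <;> simp [hW]
  have hnot : #{i : Fin j | ¬(i : ℕ) < k} = j - k := by
    have := card_filter_add_card_filter_not (s := univ) (fun i : Fin j => (i : ℕ) < k)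
    rw [Fin.card_filter_val_lt, card_univ, Fintype.card_fin] at this
    omega
  rw [Fintype.card_piFinset]
  simp_rw [hcard]
  rw [prod_ite, prod_const_one, one_mul, prod_const, hnot]

end Counting

section Array

variable {α γ : Type*} {K : Finset α} {T : Finset γ} {C : α → γ → ℝ} {X Y ε : ℝ}

lemma lt_card_sparse_rows_and_dense_rows
    (hC0 : ∀ k ∈ K, ∀ t ∈ T, 0 ≤ C k t) (hCX : ∀ k ∈ K, ∀ t ∈ T, C k t ≤ X)
    (hK : (#K : ℝ) = X) (hT : (#T : ℝ) ≤ Y) (hX : 0 < X) (hY : 0 < Y)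
    (hε0 : 0 < ε) (hε : ε < 4 / 15)
    (hlo : ε * (X * (X * Y)) ≤ ∑ k ∈ K, ∑ t ∈ T, C k t)
    (hhi : ∑ k ∈ K, ∑ t ∈ T, C k t ≤ (1 - ε) * (X * (X * Y)))
    (hmid : (#{k ∈ K | ε / 8 * (X * Y) ≤ ∑ t ∈ T, C k t ∧
      ∑ t ∈ T, C k t ≤ (1 - ε / 8) * (X * Y)} : ℝ) < ε / 8 * X) :
    3 * ε / 4 * X < #{k ∈ K | ∑ t ∈ T, C k t < ε / 8 * (X * Y)} ∧
      3 * ε / 4 * X < #{k ∈ K | (1 - ε / 8) * (X * Y) < ∑ t ∈ T, C k t} := by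
  set R : α → ℝ := fun k => ∑ t ∈ T, C k t
  have hXY : 0 < X * Y := mul_pos hX hY
  have hεXY : 0 < ε / 8 * (X * Y) := by positivity
  have hgap : ε / 8 * (X * Y) < (1 - ε / 8) * (X * Y) := by nlinarith
  have hR : ∀ k ∈ K, 0 ≤ R k ∧ R k ≤ X * Y := fun k hk =>
    ⟨sum_nonneg fun t ht => hC0 k hk t ht,
      (sum_le_card_nsmul _ _ X fun t ht => hCX k hk t ht).trans
        (by rw [nsmul_eq_mul, mul_comm]; exact mul_le_mul_of_nonneg_left hT hX.le)⟩
  have hpart : ∀ k ∈ K, (1 : ℝ) = (if R k < ε / 8 * (X * Y) then 1 else 0) +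
      (if ε / 8 * (X * Y) ≤ R k ∧ R k ≤ (1 - ε / 8) * (X * Y) then 1 else 0) +
      (if (1 - ε / 8) * (X * Y) < R k then 1 else 0) := by
    intro k _
    split_ifs <;> grind
  have hup : ∀ k ∈ K, R k ≤ ε / 8 * (X * Y) +
      X * Y * (if ε / 8 * (X * Y) ≤ R k ∧ R k ≤ (1 - ε / 8) * (X * Y) then 1 else 0) +
      X * Y * (if (1 - ε / 8) * (X * Y) < R k then 1 else 0) := by
    intro k hk
    have hRk := hR k hk
    split_ifs <;> grind
  have hdown : ∀ k ∈ K,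
      (1 - ε / 8) * (X * Y) * (if (1 - ε / 8) * (X * Y) < R k then 1 else 0) ≤ R k := by
    intro k hk
    split_ifs <;> linarith [hR k hk]
  have hsum_up := sum_le_sum hup
  have hsum_down := sum_le_sum hdown
  have hcount := sum_congr rfl hpart
  simp only [sum_add_distrib, sum_const, ← mul_sum, ← natCast_card_filter, nsmul_eq_mul,
    mul_one] at hsum_up hsum_down hcount
  have hdense : (1 - ε / 8) * #{k ∈ K | (1 - ε / 8) * (X * Y) < R k} ≤ (1 - ε) * X :=
    le_of_mul_le_mul_left (by nlinarith) hXY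
  constructor
  · nlinarith [mul_lt_mul_of_pos_left hmid (by linarith : (0 : ℝ) < 1 - ε / 8)]
  · nlinarith [mul_lt_mul_of_pos_left hmid hXY]

lemma card_heavy_cols_le [DecidableEq α]
    (hC0 : ∀ k ∈ K, ∀ t ∈ T, 0 ≤ C k t) (hCX : ∀ k ∈ K, ∀ t ∈ T, C k t ≤ X)
    (hK : (#K : ℝ) = X) (hX : 0 < X) (hε0 : 0 < ε)
    (hsparse : 3 * ε / 4 * X < #{k ∈ K | ∑ t ∈ T, C k t < ε / 8 * (X * Y)}) :
    (#{t ∈ T | (1 - ε / 16) * X ^ 2 < ∑ k ∈ K, C k t} : ℝ) ≤ 3 * ε / 10 * Y := by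
  set Ks := {k ∈ K | ∑ t ∈ T, C k t < ε / 8 * (X * Y)}
  have hrow : ∀ k ∈ Ks, (#{t ∈ T | X / 2 ≤ C k t} : ℝ) ≤ ε / 4 * Y := fun k hk => by
    have := card_filter_half_le_lt_of_sum_lt (fun t ht => hC0 k (mem_filter.1 hk).1 t ht) hX
      (mem_filter.1 hk).2
    linarith
  have hcol : ∀ t ∈ T, (1 - ε / 16) * X ^ 2 < ∑ k ∈ K, C k t →
      5 / 6 * (#Ks : ℝ) ≤ #{k ∈ Ks | X / 2 ≤ C k t} := by
    intro t ht hheavy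
    have hfull := lt_card_filter_half_le_of_lt_sum (δ := ε / 16)
      (fun k hk => hCX k hk t ht) hX hK.le (by rwa [← sq])
    have : (#{k ∈ K | X / 2 ≤ C k t} : ℝ) + #Ks ≤ #{k ∈ Ks | X / 2 ≤ C k t} + #K := by
      exact_mod_cast card_filter_add_card_le (filter_subset _ _) _
    linarith
  have hdc : ∑ k ∈ Ks, (#{t ∈ T | X / 2 ≤ C k t} : ℝ) =
      ∑ t ∈ T, (#{k ∈ Ks | X / 2 ≤ C k t} : ℝ) := by
    exact_mod_cast sum_card_bipartiteAbove_eq_sum_card_bipartiteBelow (fun k t => X / 2 ≤ C k t)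
  have hheavy : (#{t ∈ T | (1 - ε / 16) * X ^ 2 < ∑ k ∈ K, C k t} : ℝ) * (5 / 6 * #Ks) ≤
      #Ks * (ε / 4 * Y) := by
    calc _ ≤ ∑ t ∈ T with (1 - ε / 16) * X ^ 2 < ∑ k ∈ K, C k t,
          (#{k ∈ Ks | X / 2 ≤ C k t} : ℝ) := by
          simpa using card_nsmul_le_sum _ _ _ fun t ht =>
            hcol t (mem_filter.1 ht).1 (mem_filter.1 ht).2
      _ ≤ ∑ t ∈ T, (#{k ∈ Ks | X / 2 ≤ C k t} : ℝ) :=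
          sum_le_sum_of_subset_of_nonneg (filter_subset _ _) fun _ _ _ => Nat.cast_nonneg _
      _ = ∑ k ∈ Ks, (#{t ∈ T | X / 2 ≤ C k t} : ℝ) := hdc.symm
      _ ≤ #Ks * (ε / 4 * Y) := by simpa using sum_le_card_nsmul _ _ _ hrow
  have hKs : (0 : ℝ) < #Ks := lt_of_le_of_lt (by positivity) hsparse
  nlinarith

lemma lt_card_heavy_cols
    (hC0 : ∀ k ∈ K, ∀ t ∈ T, 0 ≤ C k t) (hCX : ∀ k ∈ K, ∀ t ∈ T, C k t ≤ X)
    (hT : (#T : ℝ) ≤ Y) (hX : 0 < X) (hε0 : 0 < ε)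
    (hdense : 3 * ε / 4 * X < #{k ∈ K | (1 - ε / 8) * (X * Y) < ∑ t ∈ T, C k t})
    (hmid : (#{t ∈ T | ε / 16 * X ^ 2 ≤ ∑ k ∈ K, C k t ∧
      ∑ k ∈ K, C k t ≤ (1 - ε / 16) * X ^ 2} : ℝ) < Y / 3) :
    (1 / 2 - ε / 4) * Y < #{t ∈ T | (1 - ε / 16) * X ^ 2 < ∑ k ∈ K, C k t} := by
  set Kd := {k ∈ K | (1 - ε / 8) * (X * Y) < ∑ t ∈ T, C k t}
  have hrow : ∀ k ∈ Kd, (1 - ε / 4) * Y ≤ (#{t ∈ T | X / 2 ≤ C k t} : ℝ) := fun k hk => by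
    have := lt_card_filter_half_le_of_lt_sum (δ := ε / 8)
      (fun t ht => hCX k (mem_filter.1 hk).1 t ht) hX hT (mem_filter.1 hk).2
    linarith
  have hcol : ∀ t ∈ T, (#{k ∈ Kd | X / 2 ≤ C k t} : ℝ) ≤ #Kd / 6 +
      #Kd * (if ε / 16 * X ^ 2 ≤ ∑ k ∈ K, C k t ∧ ∑ k ∈ K, C k t ≤ (1 - ε / 16) * X ^ 2
        then 1 else 0) +
      #Kd * (if (1 - ε / 16) * X ^ 2 < ∑ k ∈ K, C k t then 1 else 0) := by
    intro t ht
    have hle : (#{k ∈ Kd | X / 2 ≤ C k t} : ℝ) ≤ #Kd := by exact_mod_cast card_filter_le _ _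
    by_cases hlight : ∑ k ∈ K, C k t < ε / 16 * X ^ 2
    · have hfull := card_filter_half_le_lt_of_sum_lt (δ := ε / 16) (N := X)
        (fun k hk => hC0 k hk t ht) hX (by rwa [← sq])
      have : (#{k ∈ Kd | X / 2 ≤ C k t} : ℝ) ≤ #{k ∈ K | X / 2 ≤ C k t} := by
        exact_mod_cast card_le_card (filter_subset_filter _ (filter_subset _ _))
      split_ifs <;> nlinarith
    · split_ifs <;> grind
  have hdc : ∑ k ∈ Kd, (#{t ∈ T | X / 2 ≤ C k t} : ℝ) =
      ∑ t ∈ T, (#{k ∈ Kd | X / 2 ≤ C k t} : ℝ) := by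
    exact_mod_cast sum_card_bipartiteAbove_eq_sum_card_bipartiteBelow (fun k t => X / 2 ≤ C k t)
  have h1 := sum_le_sum hcol
  simp only [sum_add_distrib, sum_const, ← mul_sum, ← natCast_card_filter, nsmul_eq_mul] at h1
  have h2 : #Kd * ((1 - ε / 4) * Y) ≤ ∑ k ∈ Kd, (#{t ∈ T | X / 2 ≤ C k t} : ℝ) := by
    simpa using card_nsmul_le_sum _ _ _ hrow
  have hKd : (0 : ℝ) < #Kd := lt_of_le_of_lt (by positivity) hdense
  nlinarith

theorem many_mid_rows_or_many_mid_cols [DecidableEq α]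
    (hC0 : ∀ k ∈ K, ∀ t ∈ T, 0 ≤ C k t) (hCX : ∀ k ∈ K, ∀ t ∈ T, C k t ≤ X)
    (hK : (#K : ℝ) = X) (hT : (#T : ℝ) ≤ Y) (hε0 : 0 < ε) (hε : ε < 4 / 15)
    (hlo : ε * (X * (X * Y)) ≤ ∑ k ∈ K, ∑ t ∈ T, C k t)
    (hhi : ∑ k ∈ K, ∑ t ∈ T, C k t ≤ (1 - ε) * (X * (X * Y))) :
    ε / 8 * X ≤ #{k ∈ K | ε / 8 * (X * Y) ≤ ∑ t ∈ T, C k t ∧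
      ∑ t ∈ T, C k t ≤ (1 - ε / 8) * (X * Y)} ∨
    Y / 3 ≤ #{t ∈ T | ε / 16 * X ^ 2 ≤ ∑ k ∈ K, C k t ∧
      ∑ k ∈ K, C k t ≤ (1 - ε / 16) * X ^ 2} := by
  by_contra! ⟨hrows, hcols⟩
  have hX : 0 < X := pos_of_mul_pos_right ((Nat.cast_nonneg _).trans_lt hrows) (by positivity)
  have hY : 0 < Y := by linarith [(Nat.cast_nonneg _ : (0 : ℝ) ≤ _).trans_lt hcols]
  obtain ⟨hsparse, hdense⟩ :=
    lt_card_sparse_rows_and_dense_rows hC0 hCX hK hT hX hY hε0 hε hlo hhi hrows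
  have hfew := card_heavy_cols_le hC0 hCX hK hX hε0 hsparse
  have hmany := lt_card_heavy_cols hC0 hCX hT hX hε0 hdense hcols
  nlinarith

end Array

section Fibers

variable {α β γ : Type*} [DecidableEq α] [DecidableEq γ] {K : Finset α} {T : Finset γ}
  {A : Finset β} {p : β → α} {q : β → γ}

lemma card_filter_fiber_eq_sum (hq : ∀ a ∈ A, q a ∈ T) (k : α) :
    #{a ∈ A | p a = k} = ∑ t ∈ T, #{a ∈ A | p a = k ∧ q a = t} := by
  rw [card_eq_sum_card_fiberwise fun a ha => hq a (mem_filter.1 ha).1]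
  simp only [filter_filter]

theorem many_mid_slices_or_many_mid_planes {X Y ε : ℝ}
    (hp : ∀ a ∈ A, p a ∈ K) (hq : ∀ a ∈ A, q a ∈ T)
    (hline : ∀ k t, (#{a ∈ A | p a = k ∧ q a = t} : ℝ) ≤ X)
    (hK : (#K : ℝ) = X) (hT : (#T : ℝ) ≤ Y) (hε0 : 0 < ε) (hε : ε < 4 / 15)
    (hlo : ε * (X * (X * Y)) ≤ #A) (hhi : (#A : ℝ) ≤ (1 - ε) * (X * (X * Y))) :
    ε / 8 * X ≤ #{k ∈ K | ε / 8 * (X * Y) ≤ #{a ∈ A | p a = k} ∧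
      (#{a ∈ A | p a = k} : ℝ) ≤ (1 - ε / 8) * (X * Y)} ∨
    Y / 3 ≤ #{t ∈ T | ε / 16 * X ^ 2 ≤ #{a ∈ A | q a = t} ∧
      (#{a ∈ A | q a = t} : ℝ) ≤ (1 - ε / 16) * X ^ 2} := by
  have hrow (k : α) : (#{a ∈ A | p a = k} : ℝ) =
      ∑ t ∈ T, (#{a ∈ A | p a = k ∧ q a = t} : ℝ) := by
    exact_mod_cast card_filter_fiber_eq_sum hq k
  have hcol (t : γ) : (#{a ∈ A | q a = t} : ℝ) =
      ∑ k ∈ K, (#{a ∈ A | p a = k ∧ q a = t} : ℝ) := by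
    simp_rw [and_comm (a := p _ = _)]
    exact_mod_cast card_filter_fiber_eq_sum hp t
  have htot : (#A : ℝ) = ∑ k ∈ K, ∑ t ∈ T, (#{a ∈ A | p a = k ∧ q a = t} : ℝ) := by
    simp_rw [← hrow]
    exact_mod_cast card_eq_sum_card_fiberwise hp
  simp only [hrow, hcol]
  rw [htot] at hlo hhi
  exact many_mid_rows_or_many_mid_cols (fun _ _ _ _ => Nat.cast_nonneg _)
    (fun k _ t _ => hline k t) hK hT hε0 hε hlo hhi

end Fibers

lemma exists_support_of_dist1_zero_eq_one {v : Pt d} (hv : dist1 0 v = 1) :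
    ∃ t₀, v t₀ * v t₀ = 1 ∧ ∀ t ≠ t₀, v t = 0 := by
  have hsum : ∑ t, (v t).natAbs = 1 := by simpa [dist1] using hv
  obtain ⟨t₀, -, ht₀⟩ := exists_ne_zero_of_sum_ne_zero (hsum ▸ one_ne_zero)
  have hsplit := add_sum_erase univ (fun t => (v t).natAbs) (mem_univ t₀)
  refine ⟨t₀, ?_, fun t ht => ?_⟩
  · rw [← Int.natAbs_mul_self', show (v t₀).natAbs = 1 by omega]
    rfl
  · have hrest : ∑ t ∈ univ.erase t₀, (v t).natAbs = 0 := by omega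
    exact Int.natAbs_eq_zero.1 (sum_eq_zero_iff.1 hrest t (mem_erase.2 ⟨ht, mem_univ t⟩))

lemma ediv_mem_Ico_ceil {L : ℕ} (hL : 0 < L) {a u : ℤ} (N : ℤ) (hdvd : (L : ℤ) ∣ u)
    (h₁ : a ≤ u) (h₂ : u < a + L * N) : u / L ∈ Ico ⌈(a : ℚ) / L⌉ (⌈(a : ℚ) / L⌉ + N) := by
  obtain ⟨v, rfl⟩ := hdvd
  have hL' : (0 : ℚ) < L := by exact_mod_cast hL
  rw [Int.mul_ediv_cancel_left _ (by positivity), mem_Ico, Int.ceil_le, ← sub_lt_iff_lt_add,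
    Int.lt_ceil, div_le_iff₀ hL', lt_div_iff₀ hL']
  constructor
  · exact_mod_cast (by linarith : a ≤ v * L)
  · push_cast
    exact_mod_cast (by linarith : (v - N) * L < a)

lemma exists_ediv_mem_Ico {L : ℕ} (hL : 0 < L) (N lo b s : ℤ) (hs : s = 1 ∨ s = -1) :
    ∃ m : ℤ, ∀ w, lo ≤ w → w < lo + L * N → (L : ℤ) ∣ (w - b) * s →
      (w - b) * s / L ∈ Ico m (m + N) := by
  obtain ⟨a, ha⟩ : ∃ a : ℤ, ∀ w, lo ≤ w → w < lo + L * N →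
      a ≤ (w - b) * s ∧ (w - b) * s < a + L * N := by
    rcases hs with rfl | rfl
    · exact ⟨lo - b, fun w h₁ h₂ => by constructor <;> linarith⟩
    · exact ⟨b - lo - L * N + 1, fun w h₁ h₂ => by constructor <;> linarith⟩
  exact ⟨_, fun w h₁ h₂ hdvd => ediv_mem_Ico_ceil hL N hdvd (ha w h₁ h₂).1 (ha w h₁ h₂).2⟩

section SliceCoord

variable {j : ℕ} {x y : Pt d} {e : Fin j → Pt d} {σ : Fin j → Fin d} {G : Set (Pt d)}
  {L Ls n : ℕ}

def IsDualCoord (e : Fin j → Pt d) (σ : Fin j → Fin d) : Prop :=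
  ∀ (c : Fin j → ℤ) (i : Fin j), (∑ i', c i' • e i') (σ i) * e i (σ i) = c i

lemma orthoUnit.exists_isDualCoord (he : orthoUnit e) : ∃ σ, IsDualCoord e σ := by
  choose σ hσ hσ0 using fun i => exists_support_of_dist1_zero_eq_one (he.1 i)
  refine ⟨σ, fun c i => ?_⟩
  have horth : ∀ i' ≠ i, e i' (σ i) * e i (σ i) = 0 := fun i' hne => by
    have : ∑ t, e i' t * e i t = 0 := he.2 hne
    rwa [sum_eq_single (σ i) (fun t _ ht => by rw [hσ0 i t ht, mul_zero]) (by simp)] at this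
  simp only [Finset.sum_apply, Pi.smul_apply, smul_eq_mul, sum_mul]
  rw [sum_eq_single i (fun i' _ hne => by rw [mul_assoc, horth i' hne, mul_zero]) (by simp),
    mul_assoc, hσ, mul_one]

def sliceCoord (y : Pt d) (e : Fin j → Pt d) (σ : Fin j → Fin d) (z : Pt d) (i : Fin j) : ℤ :=
  (z (σ i) - y (σ i)) * e i (σ i)

lemma sliceCoord_add_sum (hσ : IsDualCoord e σ) (c : Fin j → ℤ) :
    sliceCoord y e σ (y + ∑ i, c i • e i) = c := by
  funext i
  simpa [sliceCoord, Finset.sum_apply] using hσ c i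

lemma exists_eq_add_sum_iff (hσ : IsDualCoord e σ) {z : Pt d} (hz : z ∈ sliceSpan y e)
    (P : (Fin j → ℤ) → Prop) :
    (∃ c, P c ∧ z = y + ∑ i, c i • e i) ↔ P (sliceCoord y e σ z) := by
  obtain ⟨c, rfl⟩ := hz
  rw [sliceCoord_add_sum hσ]
  refine ⟨fun ⟨c', hc', h⟩ => ?_, fun h => ⟨c, h, rfl⟩⟩
  have := congrArg (sliceCoord y e σ) h
  rw [sliceCoord_add_sum hσ, sliceCoord_add_sum hσ] at this
  rwa [this]

lemma IsDualCoord.sign (hσ : IsDualCoord e σ) (i : Fin j) : e i (σ i) = 1 ∨ e i (σ i) = -1 := by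
  have := hσ (Pi.single i 1) i
  simp only [Pi.single_apply, ite_smul, one_smul, zero_smul, sum_ite_eq', mem_univ,
    if_true] at this
  exact Int.eq_one_or_neg_one_of_mul_eq_one this

lemma dvd_sliceCoord {z : Pt d} (hy : y ∈ lattice d L) (hz : z ∈ lattice d L) (i : Fin j) :
    (L : ℤ) ∣ sliceCoord y e σ z i :=
  (dvd_sub (hz (σ i)) (hy (σ i))).mul_right _

lemma sliceCoord_injOn (hσ : IsDualCoord e σ) : Set.InjOn (sliceCoord y e σ) (sliceSpan y e) := by
  rintro _ ⟨c, rfl⟩ _ ⟨c', rfl⟩ h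
  rw [sliceCoord_add_sum hσ, sliceCoord_add_sum hσ] at h
  rw [h]

lemma exists_sliceLatticeCoord (hσ : IsDualCoord e σ) (hL : 0 < L) (hLs : Ls = L * n)
    (hy : y ∈ lattice d L) (hG : G ⊆ lattice d L ∩ boxI x (-(Ls : ℤ)) (2 * Ls)) :
    ∃ (κ : Pt d → Fin j → ℤ) (m : Fin j → ℤ), Set.InjOn κ (G ∩ sliceSpan y e) ∧
      ∀ z ∈ G ∩ sliceSpan y e, (∀ i, κ z i ∈ Ico (m i) (m i + 3 * n)) ∧
        ∀ P : (Fin j → ℤ) → Prop,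
          (∃ c, P c ∧ z = y + ∑ i, c i • e i) ↔ P fun i => κ z i * L := by
  choose m hm using fun i =>
    exists_ediv_mem_Ico hL (3 * n) (x (σ i) - Ls) (y (σ i)) (e i (σ i)) (hσ.sign i)
  have hcoord : ∀ z ∈ G, sliceCoord y e σ z = fun i => sliceCoord y e σ z i / L * L :=
    fun z hz => funext fun i => (Int.ediv_mul_cancel (dvd_sliceCoord hy (hG hz).1 i)).symm
  refine ⟨fun z i => sliceCoord y e σ z i / L, m, fun z hz w hw h => ?_, fun z hz => ⟨?_, ?_⟩⟩
  · refine sliceCoord_injOn hσ hz.2 hw.2 ?_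
    rw [hcoord z hz.1, hcoord w hw.1]
    funext i
    exact congrArg (· * (L : ℤ)) (congrFun h i)
  · intro i
    have hbox := (hG hz.1).2 (σ i)
    refine hm i (z (σ i)) (by linarith) ?_ (dvd_sliceCoord hy (hG hz.1).1 i)
    rw [hLs] at hbox ⊢
    push_cast at hbox ⊢
    linarith
  · intro P
    rw [exists_eq_add_sum_iff hσ hz.2, ← hcoord z hz.1]

lemma card_line_le (hj : 2 ≤ j) {κ : Pt d → Fin j → ℤ} {P : Set (Pt d)} (hinj : Set.InjOn κ P)
    {W : Finset ℤ} (hW : ∀ z ∈ P, κ z ⟨1, by omega⟩ ∈ W) {A : Finset (Pt d)} (hA : ↑A ⊆ P)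
    (k : ℤ) (t : Fin j → ℤ) :
    #{a ∈ A | κ a ⟨0, by omega⟩ = k ∧ (fun i : Fin j => if (i : ℕ) < 2 then 0 else κ a i) = t} ≤
      #W := by
  refine card_le_card_of_injOn (fun a => κ a ⟨1, by omega⟩)
    (fun a ha => hW a (hA (mem_filter.1 ha).1)) fun a ha b hb hab => ?_
  obtain ⟨haA, rfl, rfl⟩ := mem_filter.1 ha
  obtain ⟨hbA, hpb, hqb⟩ := mem_filter.1 hb
  refine hinj (hA haA) (hA hbA) (funext fun i => ?_)
  by_cases h0 : (i : ℕ) = 0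
  · rw [show i = ⟨0, by omega⟩ from Fin.ext h0]
    exact hpb.symm
  by_cases h1 : (i : ℕ) = 1
  · rw [show i = ⟨1, by omega⟩ from Fin.ext h1]
    exact hab
  simpa [show ¬(i : ℕ) < 2 by omega] using (congrFun hqb i).symm

lemma exists_slice_fibers (hσ : IsDualCoord e σ) (hL : 0 < L) (hLs : Ls = L * n)
    (hy : y ∈ lattice d L) (hG : G ⊆ lattice d L ∩ boxI x (-(Ls : ℤ)) (2 * Ls)) (hj : 2 ≤ j)
    (A : Finset (Pt d)) (hA : ↑A ⊆ G ∩ sliceSpan y e) :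
    ∃ (p : Pt d → ℤ) (q : Pt d → Fin j → ℤ) (K : Finset ℤ) (T : Finset (Fin j → ℤ)),
      (∀ a ∈ A, p a ∈ K) ∧ (∀ a ∈ A, q a ∈ T) ∧ #K = 3 * n ∧ #T = (3 * n) ^ (j - 2) ∧
      (∀ k t, #{a ∈ A | p a = k ∧ q a = t} ≤ 3 * n) ∧
      (∀ k : ℤ, ↑A ∩ {z | ∃ c : Fin j → ℤ, c ⟨0, by omega⟩ = k * L ∧
        z = y + ∑ i, c i • e i} = ↑{a ∈ A | p a = k}) ∧
      ∀ t ∈ T, ↑A ∩ {z | ∃ c : Fin j → ℤ, (∀ i : Fin j, 2 ≤ (i : ℕ) → c i = t i * L) ∧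
        z = y + ∑ i, c i • e i} = ↑{a ∈ A | q a = t} := by
  obtain ⟨κ, m, hinj, hκ⟩ := exists_sliceLatticeCoord hσ hL hLs hy hG
  have hL' : (L : ℤ) ≠ 0 := by exact_mod_cast hL.ne'
  set W : Fin j → Finset ℤ := fun i => Ico (m i) (m i + 3 * n)
  have hW : ∀ i, #(W i) = 3 * n := fun i => by simp only [W, Int.card_Ico]; omega
  set T := Fintype.piFinset fun i : Fin j => if (i : ℕ) < 2 then {0} else W i
  have hT : ∀ t ∈ T, ∀ i : Fin j, (i : ℕ) < 2 → t i = 0 := fun t ht i hi => by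
    simpa [T, hi] using Fintype.mem_piFinset.1 ht i
  have hslice : ∀ P : (Fin j → ℤ) → Prop, ↑A ∩ {z | ∃ c, P c ∧ z = y + ∑ i, c i • e i} =
      {a | a ∈ A ∧ P fun i => κ a i * L} :=
    fun P => Set.ext fun z => and_congr_right fun hz => (hκ z (hA hz)).2 P
  -- `q` forgets the two in-plane coordinates, so that its fibres are the planes `N_t`.
  refine ⟨fun z => κ z ⟨0, by omega⟩, fun z i => if (i : ℕ) < 2 then 0 else κ z i,
    W ⟨0, by omega⟩, T, fun a ha => (hκ a (hA ha)).1 _, fun a ha => ?_, hW _,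
    card_piFinset_ite_val_lt 0 W hW,
    fun k t => (card_line_le hj hinj (fun z hz => (hκ z hz).1 _) hA k t).trans (hW _).le,
    fun k => ?_, fun t ht => ?_⟩
  · refine Fintype.mem_piFinset.2 fun i => ?_
    dsimp only
    split_ifs
    · exact mem_singleton_self 0
    · exact (hκ a (hA ha)).1 i
  · rw [hslice]
    ext z
    simp [mul_left_inj' hL']
  · rw [hslice]
    ext z
    simp only [Set.mem_ofPred_eq, coe_filter, funext_iff]
    refine and_congr_right fun _ => forall_congr' fun i => ?_
    split_ifs with hi
    · simp [hi, hT t ht i hi]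
    · simp [show 2 ≤ (i : ℕ) by omega, mul_left_inj' hL']

end SliceCoord

lemma boxI_finite (x : Pt d) (lo hi : ℤ) : (boxI x lo hi).Finite :=
  (Set.finite_Icc (x + fun _ => lo) (x + fun _ => hi)).subset fun _ hz =>
    ⟨fun i => (hz i).1, fun i => (hz i).2.le⟩

lemma setOf_exists_subset_sliceSpan {j : ℕ} (y : Pt d) (e : Fin j → Pt d)
    (P : (Fin j → ℤ) → Prop) : {z | ∃ c, P c ∧ z = y + ∑ i, c i • e i} ⊆ sliceSpan y e :=
  fun _ ⟨c, _, hc⟩ => ⟨c, hc⟩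

lemma bdWithin_inter_subset {L : ℕ} {G S S₀ A : Set (Pt d)} (hS : S ⊆ S₀) :
    bdWithin L (G ∩ S) (A ∩ S) ⊆ bdWithin L (G ∩ S₀) A :=
  fun _ ⟨hd, h₁, h₂, h₃⟩ => ⟨hd, h₁.1, ⟨h₂.1, hS h₂.2⟩, fun h => h₃ ⟨h, h₂.2⟩⟩

lemma card_filter_mul_le_ncard_bdWithin {ι : Type*} [DecidableEq ι] {L : ℕ}
    {G S₀ : Set (Pt d)} (hG : G.Finite) {A : Finset (Pt d)} (hAG : ↑A ⊆ G)
    {S : ι → Set (Pt d)} {lo hi b : ℝ}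
    (hiso : ∀ i, ∀ B ⊆ G ∩ S i, lo ≤ (B.ncard : ℝ) → (B.ncard : ℝ) ≤ hi →
      b ≤ ((bdWithin L (G ∩ S i) B).ncard : ℝ))
    (hS : ∀ i, S i ⊆ S₀) {f : Pt d → ι} {I : Finset ι}
    (hAS : ∀ i ∈ I, ↑A ∩ S i = ↑{a ∈ A | f a = i}) :
    #{i ∈ I | lo ≤ #{a ∈ A | f a = i} ∧ (#{a ∈ A | f a = i} : ℝ) ≤ hi} * b ≤
      ((bdWithin L (G ∩ S₀) ↑A).ncard : ℝ) := by
  set J := {i ∈ I | lo ≤ #{a ∈ A | f a = i} ∧ (#{a ∈ A | f a = i} : ℝ) ≤ hi}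
  have hfin : (bdWithin L (G ∩ S₀) ↑A).Finite :=
    (A.finite_toSet.prod hG).subset fun p hp => ⟨hp.2.1, hp.2.2.1.1⟩
  have hdisj : (J : Set ι).PairwiseDisjoint fun i => bdWithin L (G ∩ S i) (↑A ∩ S i) := by
    intro i hi l hl hne
    refine Set.disjoint_left.2 fun p hp hq => hne ?_
    have hpi := hAS i (mem_filter.1 hi).1 ▸ hp.2.1
    have hpl := hAS l (mem_filter.1 hl).1 ▸ hq.2.1
    exact (mem_filter.1 hpi).2.symm.trans (mem_filter.1 hpl).2
  have hb : ∀ i ∈ J, b ≤ ((bdWithin L (G ∩ S i) (↑A ∩ S i)).ncard : ℝ) := fun i hi => by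
    obtain ⟨hiI, hlo, hhi⟩ := mem_filter.1 hi
    have hcard : ((↑A ∩ S i).ncard : ℝ) = #{a ∈ A | f a = i} := by
      rw [hAS i hiI, Set.ncard_coe_finset]
    exact hiso i _ (Set.inter_subset_inter_left _ hAG) (hcard ▸ hlo) (hcard ▸ hhi)
  calc #J * b ≤ ∑ i ∈ J, ((bdWithin L (G ∩ S i) (↑A ∩ S i)).ncard : ℝ) := by
        simpa using card_nsmul_le_sum J _ b hb
    _ = ((⋃ i ∈ (J : Set ι), bdWithin L (G ∩ S i) (↑A ∩ S i)).ncard : ℝ) := by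
        rw [Set.Finite.ncard_biUnion J.finite_toSet
          (fun i _ => hfin.subset (bdWithin_inter_subset (hS i))) hdisj, finsum_mem_coe_finset]
        push_cast
        rfl
    _ ≤ _ := by
        exact_mod_cast Set.ncard_le_ncard
          (Set.iUnion₂_subset fun i _ => bdWithin_inter_subset (hS i)) hfin

/-- dimension-reduction step, case `j ≥ 3`, of Lemma 3.6. If all
`(j−1)`-dimensional slices of the box `x+[−L_s,2L_s)^d` are dense in `G` and satisfy a
`(j−1)`-dimensional isoperimetric inequality, and all `2`-dimensional slices satisfy a
`2`-dimensional isoperimetric inequality, then every `a' ⊆ g' = G ∩ (y + ∑ᵢ ℤ·eᵢ)` of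
intermediate density satisfies the `j`-dimensional isoperimetric inequality with constant
`min((ε/8)·γ_{j−1}, (1/3)·γ₂)`. -/
theorem stmt11 (d j : ℕ) (hj3 : 3 ≤ j)
    (ε : ℝ) (hε : ε ∈ Set.Ioo (0:ℝ) (4/15))
    (L0 Ls : ℕ) (hL0 : 0 < L0) (hdvd : L0 ∣ Ls)
    (x : Pt d)
    (y : Pt d) (hy : y ∈ lattice d L0 ∩ boxI x (-(Ls:ℤ)) (2*Ls))
    (e : Fin j → Pt d) (he : orthoUnit e)
    (G : Set (Pt d)) (hG : G ⊆ lattice d L0 ∩ boxI x (-(Ls:ℤ)) (2*Ls))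
    -- (ii) the (j−1)-dimensional isoperimetric inequality on slices M_k
    (γj : ℝ) (hγj : 0 < γj)
    (hMk : ∀ k : ℤ, ∀ A : Set (Pt d),
      A ⊆ G ∩ {z | ∃ c : Fin j → ℤ, c ⟨0, by omega⟩ = k * L0 ∧ z = y + ∑ i, c i • e i} →
      (ε/8) * ((3*(Ls:ℝ))/(L0:ℝ)) ^ (j-1) ≤ (A.ncard : ℝ) →
      (A.ncard : ℝ) ≤ (1 - ε/8) * ((3*(Ls:ℝ))/(L0:ℝ)) ^ (j-1) →
      γj * ((3*(Ls:ℝ))/(L0:ℝ)) ^ (j-2) ≤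
        ((bdWithin L0
          (G ∩ {z | ∃ c : Fin j → ℤ, c ⟨0, by omega⟩ = k * L0 ∧ z = y + ∑ i, c i • e i}) A).ncard : ℝ))
    -- (iii) the 2-dimensional isoperimetric inequality on slices N_t
    (γ2 : ℝ) (hγ2 : 0 < γ2)
    (hNt : ∀ t : Fin j → ℤ, ∀ A : Set (Pt d),
      A ⊆ G ∩ {z | ∃ c : Fin j → ℤ, (∀ i : Fin j, 2 ≤ (i:ℕ) → c i = t i * L0) ∧
          z = y + ∑ i, c i • e i} →
      (ε/16) * ((3*(Ls:ℝ))/(L0:ℝ)) ^ 2 ≤ (A.ncard : ℝ) →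
      (A.ncard : ℝ) ≤ (1 - ε/16) * ((3*(Ls:ℝ))/(L0:ℝ)) ^ 2 →
      γ2 * ((3*(Ls:ℝ))/(L0:ℝ)) ≤
        ((bdWithin L0
          (G ∩ {z | ∃ c : Fin j → ℤ, (∀ i : Fin j, 2 ≤ (i:ℕ) → c i = t i * L0) ∧
              z = y + ∑ i, c i • e i}) A).ncard : ℝ)) :
    ∀ a' : Set (Pt d), a' ⊆ G ∩ sliceSpan y e →
      ε * ((3*(Ls:ℝ))/(L0:ℝ)) ^ j ≤ (a'.ncard : ℝ) →
      (a'.ncard : ℝ) ≤ (1 - ε) * ((3*(Ls:ℝ))/(L0:ℝ)) ^ j →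
      min ((ε/8) * γj) ((1/3) * γ2) * ((3*(Ls:ℝ))/(L0:ℝ)) ^ (j-1) ≤
        ((bdWithin L0 (G ∩ sliceSpan y e) a').ncard : ℝ) := by
  intro a' ha' hlo hhi
  obtain ⟨σ, hσ⟩ := he.exists_isDualCoord
  obtain ⟨n, hn⟩ := hdvd
  have hGfin : G.Finite := (boxI_finite x _ _).subset fun z hz => (hG hz).2
  obtain ⟨A, rfl⟩ := (hGfin.subset fun z hz => (ha' hz).1).exists_finset_coe
  obtain ⟨p, q, K, T, hp, hq, hK, hT, hline, hM, hN⟩ :=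
    exists_slice_fibers hσ hL0 hn hy.1 hG (by omega) A ha'
  set X : ℝ := 3 * (Ls : ℝ) / L0 with hXdef
  have hX : ((3 * n : ℕ) : ℝ) = X := by
    rw [hXdef, hn]
    push_cast
    field_simp
  have hX0 : 0 ≤ X := hX ▸ Nat.cast_nonneg _
  have hpow : X ^ (j - 1) = X * X ^ (j - 2) := by rw [← pow_succ']; congr 1; omega
  have hpowj : X ^ j = X * (X * X ^ (j - 2)) := by rw [← hpow, ← pow_succ']; congr 1; omega
  rw [Set.ncard_coe_finset, hpowj] at hlo hhi
  rw [hpow]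
  simp only [hpow] at hMk
  have hAG : ↑A ⊆ G := ha'.trans Set.inter_subset_left
  rcases many_mid_slices_or_many_mid_planes hp hq
    (fun k t => by rw [← hX]; exact_mod_cast hline k t) (by rw [hK, hX])
    (by rw [hT, ← hX]; push_cast; rfl) hε.1 hε.2 hlo hhi with hmany | hmany
  · calc _ ≤ ε / 8 * γj * (X * X ^ (j - 2)) := by gcongr; exact min_le_left _ _
      _ = ε / 8 * X * (γj * X ^ (j - 2)) := by ring
      _ ≤ _ * (γj * X ^ (j - 2)) := by gcongr
      _ ≤ _ := card_filter_mul_le_ncard_bdWithin hGfin hAG hMk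
          (fun _ => setOf_exists_subset_sliceSpan y e _) fun k _ => hM k
  · calc _ ≤ 1 / 3 * γ2 * (X * X ^ (j - 2)) := by gcongr; exact min_le_right _ _
      _ = X ^ (j - 2) / 3 * (γ2 * X) := by ring
      _ ≤ _ * (γ2 * X) := by gcongr
      _ ≤ _ := card_filter_mul_le_ncard_bdWithin hGfin hAG hNt
          (fun _ => setOf_exists_subset_sliceSpan y e _) hN

end Perco
end

section
/- Assume the family {P^u}_{u∈(a,b)} satisfies S1. Then for any u ∈ (a,b): P^u-almost surely, the set S_∞ is non-empty and connected, and there exist c₁ = c₁(u) > 0 and C₁ = C₁(u) < ∞ such that for all R ≥ 1, P^u[S_∞ ∩ B(0,R) ≠ ∅] ≥ 1 − C₁·e^{−c₁(log R)^{1+Δ_S}}. -/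
/-!
Work along the dyadic scales `2 ^ k`. By S1, both local-uniqueness events hold at scale `2 ^ k`
except with probability at most `2 exp (-(k log 2) ^ β)`, `β = 1 + Δ_S`, and since `t ↦ t ^ β` is superadditive
these bounds decay geometrically in `k`. If every scale from `2 ^ k₀` on is good, choose
`x_k ∈ S_{2^k} ∩ B(0, 2^k)`: local uniqueness at scale `2 ^ (k+1)` connects `x_k` to `x_{k+1}`,
so all `x_k` lie in one cluster of unbounded diameter, hence infinite and meeting `B(0, 2^k₀)`;
the same event connects every point of `S_∞` in `B(0, 2^(k+1))` to `x_{k+1}`, so `S_∞` is this cluster.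
The probability that some scale beyond `k₀` is bad tends to `0`, which gives the almost-sure
statement, and choosing `2 ^ k₀ ≤ R < 2 ^ (k₀+1)` gives the quantitative one.
-/

open MeasureTheory Filter
open scoped ENNReal

namespace Perco

variable {d : ℕ}

lemma dist1_comm (x y : Pt d) : dist1 x y = dist1 y x :=
  Finset.sum_congr rfl fun i _ => by omega

lemma finite_setOf_dist1_le (x : Pt d) (n : ℕ) : {y : Pt d | dist1 x y ≤ n}.Finite := by
  refine (Set.Finite.pi fun i => Set.finite_Icc (x i - n) (x i + n)).subset fun y hy i _ => ?_
  have hi : (x i - y i).natAbs ≤ dist1 x y :=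
    Finset.single_le_sum (f := fun i => (x i - y i).natAbs) (by simp) (Finset.mem_univ i)
  simp only [Set.mem_ofPred_eq] at hy
  simp only [Set.mem_Icc]
  omega

lemma infinite_iff_forall_exists_le_dist1 {C : Set (Pt d)} :
    C.Infinite ↔ ∀ n : ℕ, ∃ y ∈ C, ∃ z ∈ C, n ≤ dist1 y z := by
  constructor
  · intro hC n
    obtain ⟨y, hy⟩ := hC.nonempty
    by_contra! h
    exact hC ((finite_setOf_dist1_le y n).subset fun z hz => (h y hy z hz).le)
  · intro h hC
    obtain ⟨M, hM⟩ := ((hC.prod hC).image fun p => dist1 p.1 p.2).bddAbove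
    obtain ⟨y, hy, z, hz, hyz⟩ := h (M + 1)
    have : dist1 y z ≤ M := hM ⟨(y, z), ⟨hy, hz⟩, rfl⟩
    omega

lemma adj.symm {x y : Pt d} (h : adj x y) : adj y x := (dist1_comm y x).trans h

lemma connIn_refl {T : Set (Pt d)} {x : Pt d} (hx : x ∈ T) : connIn T x x :=
  ⟨hx, hx, .refl⟩

lemma connIn.trans {T : Set (Pt d)} {x y z : Pt d} (hxy : connIn T x y) (hyz : connIn T y z) :
    connIn T x z :=
  ⟨hxy.1, hyz.2.1, hxy.2.2.trans hyz.2.2⟩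

lemma connIn.symm {T : Set (Pt d)} {x y : Pt d} (h : connIn T x y) : connIn T y x :=
  ⟨h.2.1, h.1, Relation.reflTransGen_swap.1 <|
    Relation.ReflTransGen.mono (fun _ _ hab => ⟨hab.1.symm, hab.2.2, hab.2.1⟩) _ _ h.2.2⟩

lemma connIn.mono {T T' : Set (Pt d)} (hT : T ⊆ T') {x y : Pt d} (h : connIn T x y) :
    connIn T' x y :=
  ⟨hT h.1, hT h.2.1,
    Relation.ReflTransGen.mono (fun _ _ hab => ⟨hab.1, hT hab.2.1, hT hab.2.2⟩) _ _ h.2.2⟩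

lemma connIn_iff_exists_finset {T : Set (Pt d)} {x y : Pt d} :
    connIn T x y ↔ ∃ F : Finset (Pt d), ↑F ⊆ T ∧ connIn F x y := by
  refine ⟨fun h => ?_, fun ⟨F, hF, h⟩ => h.mono hF⟩
  obtain ⟨hx, -, h⟩ := h
  induction h with
  | refl => exact ⟨{x}, by simpa using hx, connIn_refl (by simp)⟩
  | @tail z w _ hzw ih =>
    obtain ⟨F, hF, hxz⟩ := ih
    classical
    refine ⟨insert w F, by simpa [Set.insert_subset_iff] using ⟨hzw.2.2, hF⟩, ?_⟩
    have hsub : (F : Set (Pt d)) ⊆ ↑(insert w F) := by simp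
    exact (hxz.mono hsub).trans ⟨hsub hxz.2.1, by simp, .single ⟨hzw.1, hsub hxz.2.1, by simp⟩⟩

lemma mem_Sr_of_connIn {ω : Config d} {r : ℝ} {x y : Pt d} (hxy : connIn (SS ω) x y)
    (hy : y ∈ Sr ω r) : x ∈ Sr ω r := by
  obtain ⟨-, z, hz, w, hw, hzw⟩ := hy
  exact ⟨hxy.1, z, hxy.trans hz, w, hxy.trans hw, hzw⟩

lemma Sr_anti (ω : Config d) {r r' : ℝ} (h : r' ≤ r) : Sr ω r ⊆ Sr ω r' :=
  fun _ ⟨hx, y, hy, z, hz, hyz⟩ => ⟨hx, y, hy, z, hz, h.trans hyz⟩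

lemma Sinf_eq_iInter_Sr (ω : Config d) : Sinf ω = ⋂ n : ℕ, Sr ω n := by
  ext x
  simp only [Sinf, Set.mem_ofPred_eq, Set.mem_iInter, infinite_iff_forall_exists_le_dist1]
  refine ⟨fun ⟨hx, h⟩ n => ?_, fun h => ⟨(h 0).1, fun n => ?_⟩⟩
  · obtain ⟨y, hy, z, hz, hyz⟩ := h n
    exact ⟨hx, y, hy, z, hz, by exact_mod_cast hyz⟩
  · obtain ⟨-, y, hy, z, hz, hyz⟩ := h n
    exact ⟨y, hy, z, hz, by exact_mod_cast hyz⟩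

lemma Sinf_subset_Sr (ω : Config d) (r : ℝ) : Sinf ω ⊆ Sr ω r := by
  rw [Sinf_eq_iInter_Sr]
  exact (Set.iInter_subset _ ⌈r⌉₊).trans (Sr_anti ω (Nat.le_ceil r))

lemma ballZ_mono (x : Pt d) {R R' : ℕ} (h : R ≤ R') : ballZ x R ⊆ ballZ x R' :=
  fun _ hy => le_trans hy h

lemma measurable_mem_SS (x : Pt d) : Measurable fun ω : Config d => x ∈ SS ω :=
  measurableSet_setOfPred.1
    (measurable_pi_apply x (measurableSet_singleton true) :
      MeasurableSet ((fun ω : Config d => ω x) ⁻¹' {true}))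

lemma measurable_connIn_inter (V : Set (Pt d)) (x y : Pt d) :
    Measurable fun ω : Config d => connIn (SS ω ∩ V) x y := by
  simp_rw [connIn_iff_exists_finset (T := SS _ ∩ V), Set.subset_inter_iff, Set.subset_def]
  exact .exists fun F => .and (.and (.forall fun z => .imp measurable_const (measurable_mem_SS z))
    measurable_const) measurable_const

lemma measurable_connIn (x y : Pt d) : Measurable fun ω : Config d => connIn (SS ω) x y := by
  simpa using measurable_connIn_inter Set.univ x y

lemma measurable_mem_Sr (x : Pt d) (r : ℝ) : Measurable fun ω : Config d => x ∈ Sr ω r :=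
  (measurable_mem_SS x).and <| .exists fun y => (measurable_connIn x y).and <|
    .exists fun z => (measurable_connIn x z).and measurable_const

lemma measurableSet_locUniq1 (R : ℕ) : MeasurableSet (locUniq1 d R) :=
  measurableSet_setOfPred.2 <| .exists fun x => (measurable_mem_Sr x _).and measurable_const

lemma measurableSet_locUniq2 (R : ℕ) : MeasurableSet (locUniq2 d R) :=
  measurableSet_setOfPred.2 <|
    .forall fun x => .imp ((measurable_mem_Sr x _).and measurable_const) <|
      .forall fun y => .imp ((measurable_mem_Sr y _).and measurable_const) <|
        measurable_connIn_inter _ x y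

/-- The second event is taken at the doubled radius so that it links `S_{2^k}` to
`S_{2^(k+1)}`. -/
def dyadicGood (d k : ℕ) : Set (Config d) := locUniq1 d (2 ^ k) ∩ locUniq2 d (2 ^ (k + 1))

lemma measurableSet_dyadicGood (k : ℕ) : MeasurableSet (dyadicGood d k) :=
  (measurableSet_locUniq1 _).inter (measurableSet_locUniq2 _)

lemma connIn_of_mem_locUniq2 {ω : Config d} {R : ℕ} {x y : Pt d} (hω : ω ∈ locUniq2 d R)
    (hx : x ∈ Sr ω ((R : ℝ) / 10)) (hxR : x ∈ ballZ 0 R) (hy : y ∈ Sr ω ((R : ℝ) / 10))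
    (hyR : y ∈ ballZ 0 R) : connIn (SS ω) x y :=
  (hω x ⟨hx, hxR⟩ y ⟨hy, hyR⟩).mono Set.inter_subset_left

lemma Sr_subset_Sr_div_ten (ω : Config d) (R : ℕ) : Sr ω R ⊆ Sr ω ((R : ℝ) / 10) :=
  Sr_anti ω (div_le_self R.cast_nonneg (by norm_num))

lemma Sr_two_pow_subset (ω : Config d) (k : ℕ) :
    Sr ω ((2 ^ k : ℕ) : ℝ) ⊆ Sr ω (((2 ^ (k + 1) : ℕ) : ℝ) / 10) :=
  Sr_anti ω (by push_cast; rw [pow_succ]; linarith [pow_pos (two_pos : (0 : ℝ) < 2) k])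

lemma exists_mem_Sinf_forall_connIn_of_dyadicGood {ω : Config d} {k₀ : ℕ}
    (hω : ∀ m, ω ∈ dyadicGood d (k₀ + m)) :
    ∃ x₀ ∈ Sinf ω ∩ ballZ 0 (2 ^ k₀), ∀ w ∈ Sinf ω, connIn (SS ω) w x₀ := by
  choose X hX using fun m : ℕ => (hω m).1
  have hstep : ∀ m, connIn (SS ω) (X m) (X (m + 1)) := fun m =>
    connIn_of_mem_locUniq2 (hω m).2 (Sr_two_pow_subset ω _ (hX m).1)
      (ballZ_mono 0 (Nat.pow_le_pow_right two_pos (Nat.le_succ _)) (hX m).2)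
      (Sr_subset_Sr_div_ten ω _ (hX (m + 1)).1) (hX (m + 1)).2
  have hconn : ∀ m, connIn (SS ω) (X 0) (X m) := by
    intro m
    induction m with
    | zero => exact connIn_refl (hX 0).1.1
    | succ m ih => exact ih.trans (hstep m)
  have hX₀ : X 0 ∈ Sinf ω := by
    rw [Sinf_eq_iInter_Sr, Set.mem_iInter]
    intro n
    refine mem_Sr_of_connIn (hconn n) (Sr_anti ω ?_ (hX n).1)
    exact_mod_cast (Nat.lt_two_pow_self.trans_le (Nat.pow_le_pow_right two_pos le_add_self)).le
  refine ⟨X 0, ⟨hX₀, (hX 0).2⟩, fun w hw => ?_⟩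
  set m := distInf 0 w
  have hwR : w ∈ ballZ 0 (2 ^ (k₀ + m + 1)) :=
    (Nat.lt_two_pow_self.trans_le (Nat.pow_le_pow_right two_pos (by omega))).le
  exact (connIn_of_mem_locUniq2 (hω m).2 (Sinf_subset_Sr ω _ hw) hwR
    (Sr_subset_Sr_div_ten ω _ (hX (m + 1)).1) (hX (m + 1)).2).trans
    (hconn (m + 1)).symm

/-- The S1 error bound `exp (-(log R) ^ β)` at the scale `R = 2 ^ k`. -/
noncomputable def dyadicDecay (β : ℝ) (k : ℕ) : ℝ := Real.exp (-((k : ℝ) * Real.log 2) ^ β)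

lemma dyadicDecay_pos (β : ℝ) (k : ℕ) : 0 < dyadicDecay β k := Real.exp_pos _

lemma dyadicDecay_one_lt_one (β : ℝ) : dyadicDecay β 1 < 1 := by
  rw [dyadicDecay, Real.exp_lt_one_iff, Nat.cast_one, one_mul, neg_lt_zero]
  exact Real.rpow_pos_of_pos (Real.log_pos one_lt_two) β

/-- Superadditivity of `t ↦ t ^ β` makes the dyadic bounds decay geometrically. -/
lemma dyadicDecay_add_le {β : ℝ} (hβ : 1 ≤ β) (k m : ℕ) :
    dyadicDecay β (k + m) ≤ dyadicDecay β k * dyadicDecay β 1 ^ m := by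
  induction m with
  | zero => simp
  | succ m ih =>
    have hL : 0 ≤ Real.log 2 := Real.log_nonneg one_le_two
    have hsuper : ((↑(k + m) : ℝ) * Real.log 2) ^ β + (Real.log 2) ^ β ≤
        ((↑(k + m + 1) : ℝ) * Real.log 2) ^ β := by
      have := Real.add_rpow_le_rpow_add (by positivity) hL hβ (a := (↑(k + m) : ℝ) * Real.log 2)
      push_cast at this ⊢
      rwa [show ((k : ℝ) + m) * Real.log 2 + Real.log 2 = (k + m + 1) * Real.log 2 by ring] at this
    calc dyadicDecay β (k + (m + 1))
        ≤ dyadicDecay β (k + m) * dyadicDecay β 1 := by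
          simp only [dyadicDecay, ← Real.exp_add, Nat.cast_one, one_mul, ← add_assoc]
          exact Real.exp_le_exp.2 (by linarith)
      _ ≤ dyadicDecay β k * dyadicDecay β 1 ^ (m + 1) := by
          rw [pow_succ, ← mul_assoc]
          exact mul_le_mul_of_nonneg_right ih (dyadicDecay_pos β 1).le

lemma tendsto_dyadicDecay {β : ℝ} (hβ : 0 < β) :
    Tendsto (dyadicDecay β) atTop (nhds 0) :=
  Real.tendsto_exp_neg_atTop_nhds_zero.comp <| (tendsto_rpow_atTop hβ).comp <|
    tendsto_natCast_atTop_atTop.atTop_mul_const (Real.log_pos one_lt_two)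

lemma exp_neg_le_dyadicDecay {β f : ℝ} (k : ℕ) (hf : Real.log ((2 ^ k : ℕ) : ℝ) ^ β ≤ f) :
    Real.exp (-f) ≤ dyadicDecay β k := by
  rw [Nat.cast_pow, Nat.cast_two, Real.log_pow] at hf
  exact Real.exp_le_exp.2 (neg_le_neg hf)

lemma dyadicDecay_le_exp_neg_log_rpow {β : ℝ} (hβ : 0 ≤ β) {k R : ℕ} (hk : 1 ≤ k) (hR : 1 ≤ R)
    (hRk : R < 2 ^ (k + 1)) :
    dyadicDecay β k ≤ Real.exp (-(2⁻¹ : ℝ) ^ β * Real.log R ^ β) := by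
  have hlogR : 0 ≤ Real.log R := Real.log_nonneg (by exact_mod_cast hR)
  have hlog : Real.log R ≤ ((k : ℝ) + 1) * Real.log 2 := by
    calc Real.log R ≤ Real.log ((2 ^ (k + 1) : ℕ) : ℝ) :=
          Real.log_le_log (by positivity) (by exact_mod_cast hRk.le)
      _ = ((k : ℝ) + 1) * Real.log 2 := by push_cast; rw [Real.log_pow]; push_cast; ring
  have hk' : (1 : ℝ) ≤ k := by exact_mod_cast hk
  have hL : 0 ≤ Real.log 2 := Real.log_nonneg one_le_two
  rw [dyadicDecay, Real.exp_le_exp, neg_mul, neg_le_neg_iff, ← Real.mul_rpow (by norm_num) hlogR]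
  exact Real.rpow_le_rpow (by positivity) (by nlinarith) hβ

lemma measureReal_iUnion_le_of_le_geometric {Ω : Type*} [MeasurableSpace Ω] {μ : Measure Ω}
    [IsFiniteMeasure μ] {s : ℕ → Set Ω} {C q : ℝ} (hC : 0 ≤ C) (hq₀ : 0 ≤ q) (hq₁ : q < 1)
    (h : ∀ m, μ.real (s m) ≤ C * q ^ m) : μ.real (⋃ m, s m) ≤ C / (1 - q) := by
  refine ENNReal.toReal_le_of_le_ofReal (div_nonneg hC (sub_nonneg.2 hq₁.le)) ?_
  calc μ (⋃ m, s m) ≤ ∑' m, μ (s m) := measure_iUnion_le s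
    _ ≤ ∑' m, ENNReal.ofReal (C * q ^ m) := ENNReal.tsum_le_tsum fun m => by
        rw [← ofReal_measureReal]; exact ENNReal.ofReal_le_ofReal (h m)
    _ = ENNReal.ofReal (C / (1 - q)) := by
        rw [← ENNReal.ofReal_tsum_of_nonneg (fun m => by positivity)
          ((summable_geometric_of_lt_one hq₀ hq₁).mul_left C), tsum_mul_left,
          tsum_geometric_of_lt_one hq₀ hq₁, div_eq_mul_inv]

section Probability

variable {μ : Measure (Config d)} [IsProbabilityMeasure μ] {β : ℝ}

lemma measureReal_dyadicGood_compl_le {f : ℕ → ℝ} {R₀ : ℕ} (hβ : 1 ≤ β)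
    (hf : ∀ R : ℕ, R₀ ≤ R → Real.log R ^ β ≤ f R)
    (h₁ : ∀ R : ℕ, 1 ≤ R → 1 - Real.exp (-f R) ≤ μ.real (locUniq1 d R))
    (h₂ : ∀ R : ℕ, 1 ≤ R → 1 - Real.exp (-f R) ≤ μ.real (locUniq2 d R))
    {k : ℕ} (hk : R₀ ≤ 2 ^ k) : μ.real (dyadicGood d k)ᶜ ≤ 2 * dyadicDecay β k := by
  have hdecay : dyadicDecay β (k + 1) ≤ dyadicDecay β k := by
    have := dyadicDecay_add_le hβ k 1
    rw [pow_one] at this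
    exact this.trans (mul_le_of_le_one_right (dyadicDecay_pos β k).le
      (dyadicDecay_one_lt_one β).le)
  have e₁ := exp_neg_le_dyadicDecay k (hf _ hk)
  have e₂ := exp_neg_le_dyadicDecay (k + 1)
    (hf _ (hk.trans (Nat.pow_le_pow_right two_pos k.le_succ)))
  have hG₁ := h₁ (2 ^ k) Nat.one_le_two_pow
  have hG₂ := h₂ (2 ^ (k + 1)) Nat.one_le_two_pow
  rw [dyadicGood, Set.compl_inter]
  refine (measureReal_union_le _ _).trans ?_
  rw [probReal_compl_eq_one_sub (measurableSet_locUniq1 _),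
    probReal_compl_eq_one_sub (measurableSet_locUniq2 _)]
  linarith

lemma measureReal_iUnion_dyadicGood_compl_le {K : ℕ} (hβ : 1 ≤ β)
    (hG : ∀ k, K ≤ k → μ.real (dyadicGood d k)ᶜ ≤ 2 * dyadicDecay β k) {k₀ : ℕ} (hk₀ : K ≤ k₀) :
    μ.real (⋃ m, (dyadicGood d (k₀ + m))ᶜ) ≤ 2 * dyadicDecay β k₀ / (1 - dyadicDecay β 1) :=
  measureReal_iUnion_le_of_le_geometric (by positivity [dyadicDecay_pos β k₀])
    (dyadicDecay_pos β 1).le (dyadicDecay_one_lt_one β) fun m =>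
      (hG _ (hk₀.trans le_self_add)).trans <| by
        rw [mul_assoc]; gcongr; exact dyadicDecay_add_le hβ k₀ m

lemma ae_Sinf_nonempty_and_connIn {K : ℕ} (hβ : 1 ≤ β)
    (hG : ∀ k, K ≤ k → μ.real (dyadicGood d k)ᶜ ≤ 2 * dyadicDecay β k) :
    ∀ᵐ ω ∂μ, (Sinf ω).Nonempty ∧ ∀ x ∈ Sinf ω, ∀ y ∈ Sinf ω, connIn (SS ω) x y := by
  rw [ae_iff, ← measureReal_eq_zero_iff]
  have hbad : ∀ k₀, K ≤ k₀ → μ.real {ω | ¬((Sinf ω).Nonempty ∧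
      ∀ x ∈ Sinf ω, ∀ y ∈ Sinf ω, connIn (SS ω) x y)} ≤
      2 * dyadicDecay β k₀ / (1 - dyadicDecay β 1) := fun k₀ hk₀ => by
    refine (measureReal_mono fun ω hω => ?_).trans
      (measureReal_iUnion_dyadicGood_compl_le hβ hG hk₀)
    by_contra hgood
    obtain ⟨x₀, ⟨hx₀, -⟩, hconn⟩ :=
      exists_mem_Sinf_forall_connIn_of_dyadicGood (by simpa using hgood)
    exact hω ⟨⟨x₀, hx₀⟩, fun x hx y hy => (hconn x hx).trans (hconn y hy).symm⟩
  have hlim : Tendsto (fun k => 2 * dyadicDecay β k / (1 - dyadicDecay β 1)) atTop (nhds 0) := by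
    simpa using ((tendsto_dyadicDecay (by linarith)).const_mul 2).div_const _
  exact le_antisymm (ge_of_tendsto hlim (eventually_atTop.2 ⟨K, hbad⟩)) measureReal_nonneg

lemma one_sub_le_measureReal_Sinf_inter_ballZ_nonempty {K : ℕ} (hβ : 1 ≤ β) (hK : 1 ≤ K)
    (hG : ∀ k, K ≤ k → μ.real (dyadicGood d k)ᶜ ≤ 2 * dyadicDecay β k) {R : ℕ} (hR : 2 ^ K ≤ R) :
    1 - 2 / (1 - dyadicDecay β 1) * Real.exp (-(2⁻¹ : ℝ) ^ β * Real.log R ^ β) ≤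
      μ.real {ω | (Sinf ω ∩ ballZ (0 : Pt d) R).Nonempty} := by
  have hR₀ : R ≠ 0 := Nat.one_le_iff_ne_zero.1 (Nat.one_le_two_pow.trans hR)
  set k₀ := Nat.log 2 R
  have hKk₀ : K ≤ k₀ := (Nat.le_log_iff_pow_le one_lt_two hR₀).2 hR
  have hgood : (⋃ m, (dyadicGood d (k₀ + m))ᶜ)ᶜ ⊆ {ω | (Sinf ω ∩ ballZ (0 : Pt d) R).Nonempty} := by
    intro ω hω
    obtain ⟨x₀, ⟨hx₀, hx₀R⟩, -⟩ :=
      exists_mem_Sinf_forall_connIn_of_dyadicGood (by simpa using hω)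
    exact ⟨x₀, hx₀, ballZ_mono 0 (Nat.pow_log_le_self 2 hR₀) hx₀R⟩
  have hdecay := dyadicDecay_le_exp_neg_log_rpow (by linarith) (hK.trans hKk₀)
    (Nat.one_le_two_pow.trans hR) (Nat.lt_pow_succ_log_self one_lt_two R) (β := β)
  have hq : 0 < 1 - dyadicDecay β 1 := sub_pos.2 (dyadicDecay_one_lt_one β)
  have hbad := measureReal_iUnion_dyadicGood_compl_le hβ hG hKk₀ (μ := μ)
  have hcompl := probReal_compl_eq_one_sub (μ := μ)
    (MeasurableSet.iUnion fun m => (measurableSet_dyadicGood (d := d) (k₀ + m)).compl)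
  have hbound : 2 * dyadicDecay β k₀ / (1 - dyadicDecay β 1) ≤
      2 / (1 - dyadicDecay β 1) * Real.exp (-(2⁻¹ : ℝ) ^ β * Real.log R ^ β) := by
    rw [mul_div_right_comm]
    exact mul_le_mul_of_nonneg_left hdecay (div_nonneg zero_le_two hq.le)
  linarith [measureReal_mono hgood (μ := μ)]

end Probability

/-- Enlarging the constant by `exp (c (log R₀)^β)` makes the bound vacuous below `R₀`. -/
lemma one_sub_mul_exp_le_of_forall_le {p : ℕ → ℝ} (hp : ∀ R, 0 ≤ p R) {c C β : ℝ} (hc : 0 ≤ c)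
    (hC : 0 ≤ C) (hβ : 0 ≤ β) {R₀ : ℕ}
    (h : ∀ R : ℕ, R₀ ≤ R → 1 - C * Real.exp (-c * Real.log R ^ β) ≤ p R) (R : ℕ) (hR : 1 ≤ R) :
    1 - (C + Real.exp (c * Real.log R₀ ^ β)) * Real.exp (-c * Real.log R ^ β) ≤ p R := by
  have hexp : 0 ≤ Real.exp (c * Real.log R₀ ^ β) * Real.exp (-c * Real.log R ^ β) := by positivity
  rcases le_or_gt R₀ R with hR₀ | hR₀
  · nlinarith [h R hR₀]
  · have hlogR : 0 ≤ Real.log R := Real.log_nonneg (by exact_mod_cast hR)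
    have hlog : Real.log R ^ β ≤ Real.log R₀ ^ β :=
      Real.rpow_le_rpow hlogR (Real.log_le_log (by positivity) (by exact_mod_cast hR₀.le)) hβ
    have hone : 1 ≤ Real.exp (c * Real.log R₀ ^ β) * Real.exp (-c * Real.log R ^ β) := by
      rw [← Real.exp_add, Real.one_le_exp_iff]
      nlinarith
    nlinarith [hp R, mul_nonneg hC (Real.exp_pos (-c * Real.log R ^ β)).le]

theorem stmt13_general (d : ℕ) (a b : ℝ)
    (P : ℝ → Measure (Config d))
    (hP : ∀ u ∈ Set.Ioo a b, IsProbabilityMeasure (P u))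
    -- axiom S1:
    (fS : ℝ → ℕ → ℝ) (ΔS : ℝ → ℝ) (RS : ℝ → ℕ)
    (hΔS : ∀ u ∈ Set.Ioo a b, 0 < ΔS u)
    (hfS : ∀ u ∈ Set.Ioo a b, ∀ R : ℕ, RS u ≤ R → (Real.log R) ^ (1 + ΔS u) ≤ fS u R)
    (hS1a : ∀ u ∈ Set.Ioo a b, ∀ R : ℕ, 1 ≤ R →
      1 - Real.exp (-(fS u R)) ≤ (P u (locUniq1 d R)).toReal)
    (hS1b : ∀ u ∈ Set.Ioo a b, ∀ R : ℕ, 1 ≤ R →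
      1 - Real.exp (-(fS u R)) ≤ (P u (locUniq2 d R)).toReal) :
    ∀ u ∈ Set.Ioo a b,
      (∀ᵐ ω ∂(P u), (Sinf ω).Nonempty ∧
        ∀ x ∈ Sinf ω, ∀ y ∈ Sinf ω, connIn (SS ω) x y) ∧
      ∃ c₁ > (0:ℝ), ∃ C₁ : ℝ, 0 < C₁ ∧ ∀ R : ℕ, 1 ≤ R →
        1 - C₁ * Real.exp (-c₁ * (Real.log R) ^ (1 + ΔS u)) ≤
          (P u {ω | (Sinf ω ∩ ballZ (0 : Pt d) R).Nonempty}).toReal := by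
  intro u hu
  have := hP u hu
  set β := 1 + ΔS u
  have hβ : 1 ≤ β := by linarith [hΔS u hu]
  have hG : ∀ k, RS u + 1 ≤ k → (P u).real (dyadicGood d k)ᶜ ≤ 2 * dyadicDecay β k :=
    fun k hk => measureReal_dyadicGood_compl_le hβ (hfS u hu) (hS1a u hu) (hS1b u hu)
      (by have := @Nat.lt_two_pow_self k; omega)
  have hC : 0 ≤ 2 / (1 - dyadicDecay β 1) :=
    div_nonneg zero_le_two (sub_nonneg.2 (dyadicDecay_one_lt_one β).le)
  refine ⟨ae_Sinf_nonempty_and_connIn hβ hG, (2⁻¹ : ℝ) ^ β, by positivity, _, ?_,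
    one_sub_mul_exp_le_of_forall_le (fun _ => measureReal_nonneg) (by positivity) hC
      (by positivity) fun R hR =>
        one_sub_le_measureReal_Sinf_inter_ballZ_nonempty hβ (Nat.le_add_left 1 _) hG hR⟩
  exact add_pos_of_nonneg_of_pos hC (Real.exp_pos _)

/-- Under axiom S1 alone: for every `u ∈ (a,b)`, `P^u`-almost surely the set
`S_∞` is non-empty and connected, and there are `c₁ = c₁(u) > 0`, `C₁ = C₁(u) < ∞` such that for
all `R ≥ 1`, `P^u[S_∞ ∩ B(0,R) ≠ ∅] ≥ 1 − C₁·exp(−c₁·(log R)^{1+Δ_S})`. -/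
theorem stmt13 (d : ℕ) (hd : 2 ≤ d) (a b : ℝ) (ha : 0 ≤ a) (hab : a < b)
    (P : ℝ → Measure (Config d))
    (hP : ∀ u ∈ Set.Ioo a b, IsProbabilityMeasure (P u))
    -- axiom S1:
    (fS : ℝ → ℕ → ℝ) (ΔS : ℝ → ℝ) (RS : ℝ → ℕ)
    (hΔS : ∀ u ∈ Set.Ioo a b, 0 < ΔS u)
    (hfS : ∀ u ∈ Set.Ioo a b, ∀ R : ℕ, RS u ≤ R → (Real.log R) ^ (1 + ΔS u) ≤ fS u R)
    (hS1a : ∀ u ∈ Set.Ioo a b, ∀ R : ℕ, 1 ≤ R →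
      1 - Real.exp (-(fS u R)) ≤ (P u (locUniq1 d R)).toReal)
    (hS1b : ∀ u ∈ Set.Ioo a b, ∀ R : ℕ, 1 ≤ R →
      1 - Real.exp (-(fS u R)) ≤ (P u (locUniq2 d R)).toReal) :
    ∀ u ∈ Set.Ioo a b,
      (∀ᵐ ω ∂(P u), (Sinf ω).Nonempty ∧
        ∀ x ∈ Sinf ω, ∀ y ∈ Sinf ω, connIn (SS ω) x y) ∧
      ∃ c₁ > (0:ℝ), ∃ C₁ : ℝ, 0 < C₁ ∧ ∀ R : ℕ, 1 ≤ R →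
        1 - C₁ * Real.exp (-c₁ * (Real.log R) ^ (1 + ΔS u)) ≤
          (P u {ω | (Sinf ω ∩ ballZ (0 : Pt d) R).Nonempty}).toReal :=
  stmt13_general d a b P hP fS ΔS RS hΔS hfS hS1a hS1b

end Perco
end
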